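/- In the James tree space JT, for any σ ∈ 2^ω and k ∈ ℕ, the map f_σ^k: [ℕ]^k → B ⊆ JT* given by f_σ^k(n) = (1/√k)·Σ_{i=1}^k Σ_{s ≤ σ|_{n_i}} e*_s is 1-Lipschitz with respect to the interlacing metric d_K on [ℕ]^k. -/

import Mathlib

open Filter Finset

/-- The interlacing graph distance: `d_K(n,m) = sup { | |n ∩ S| - |m ∩ S| | : S a segment of ℕ }`. -/
noncomputable def dseg (n m : Finset ℕ) : ℕ :=
  ⨆ a : ℕ, ⨆ b : ℕ,
    (((n ∩ Finset.Icc a b).card : ℤ) - ((m ∩ Finset.Icc a b).card : ℤ)).natAbs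

/-- A segment of the dyadic tree `T = 2^{<ω}`. -/
def IsSeg (S : Finset (List Bool)) : Prop :=
  ∃ t t' : List Bool, t <+: t' ∧ ∀ s : List Bool, s ∈ S ↔ (t <+: s ∧ s <+: t')

/-- The set of values `(Σ_i (Σ_{s ∈ S_i} x(s))²)^{1/2}` over finite collections of pairwise
disjoint segments of `T`. -/
noncomputable def JTset (x : List Bool → ℝ) : Set ℝ :=
  {v : ℝ | ∃ (n : ℕ) (S : Fin n → Finset (List Bool)),
    (∀ i, IsSeg (S i)) ∧ (∀ i j, i ≠ j → Disjoint (S i) (S j)) ∧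
    v = Real.sqrt (∑ i, (∑ s ∈ S i, x s) ^ 2)}

/-- The James tree norm. -/
noncomputable def JTnorm (x : List Bool → ℝ) : ℝ := sSup (JTset x)

/-- Membership in the James tree space `JT`. -/
def MemJT (x : List Bool → ℝ) : Prop := BddAbove (JTset x)

/-- `σ|_l`, the initial segment of length `l` of a branch `σ ∈ 2^ω`. -/
def trunc (σ : ℕ → Bool) (l : ℕ) : List Bool := List.ofFn (fun j : Fin l => σ j)

/-- The value at `x ∈ JT` of the functional `f_σ^k(n) - f_σ^k(m) ∈ B ⊆ JT*`, where
`f_σ^k(n) = (1/√k)·Σ_{i=1}^k Σ_{s ≤ σ|_{n_i}} e*_s`: its coefficient at `s = σ|_l` is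
`(1/√k)·(#{i : l ≤ n_i} - #{i : l ≤ m_i})`, and it vanishes elsewhere.  `R` is any bound
on the elements of `n ∪ m`. -/
noncomputable def pairDiff (σ : ℕ → Bool) (k : ℕ) (n m : Finset ℕ) (R : ℕ)
    (x : List Bool → ℝ) : ℝ :=
  (1 / Real.sqrt k) * ∑ l ∈ Finset.range (R + 1),
    (((n.filter (fun a => l ≤ a)).card : ℝ) - ((m.filter (fun a => l ≤ a)).card : ℝ)) *
      x (trunc σ l)

/-!
Put `c l = #{a ∈ n | l ≤ a} - #{a ∈ m | l ≤ a}` (`tailDiff`), so that `pairDiff` is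
`(1/√k) ∑ l, c l · x (σ|l)`, and `|c| ≤ d := d_K(n, m)`. Split `c` into layers,
`c = ∑_{h=1}^{d} ([h ≤ c] - [c ≤ -h])`. For each `h`, the sets `{c ≥ h}` and `{c ≤ -h}` are unions
of maximal runs of consecutive integers; along the branch `σ` every run is a segment of the tree
and all these segments are pairwise disjoint, so by Cauchy–Schwarz and the definition of the
James tree norm the `h`-th layer contributes at most `√r · ‖x‖`, where `r` is the number of runs.
The function `c` only increases at points of `m`, and by one: every run of `{c ≥ h}` is entered
at such a point where `c ≥ 0`, every run of `{c ≤ -h}` is left at one where `c < 0`, so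
`r ≤ #m = k`. Summing over the `d` layers gives `|∑ l, c l · x (σ|l)| ≤ d √k ‖x‖`.
-/

namespace Finset

variable (F : Finset ℕ)

def runStarts : Finset ℕ := F.filter (fun p => p = 0 ∨ p - 1 ∉ F)

theorem exists_runEnd (p : ℕ) : ∃ q, p ≤ q ∧ q + 1 ∉ F :=
  ⟨p + F.sup id, by omega, fun h => by have := F.le_sup (f := id) h; rw [id] at this; omega⟩

def runEnd (p : ℕ) : ℕ := Nat.find (F.exists_runEnd p)

variable {F}

theorem le_runEnd (p : ℕ) : p ≤ F.runEnd p := (Nat.find_spec (F.exists_runEnd p)).1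

theorem runEnd_add_one_notMem (p : ℕ) : F.runEnd p + 1 ∉ F :=
  (Nat.find_spec (F.exists_runEnd p)).2

theorem Icc_runEnd_subset {p : ℕ} (hp : p ∈ F) : Icc p (F.runEnd p) ⊆ F := by
  intro l hl
  obtain ⟨hpl, hlq⟩ := mem_Icc.mp hl
  induction l, hpl using Nat.le_induction with
  | base => exact hp
  | succ l hpl ih =>
    by_contra hl
    have : F.runEnd p ≤ l := Nat.find_min' _ ⟨hpl, hl⟩
    omega

theorem runEnd_lt_of_lt {p p' : ℕ} (hp : p ∈ F) (hp' : p' ∈ F.runStarts) (hlt : p < p') :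
    F.runEnd p < p' := by
  by_contra! hle
  have hprev : p' - 1 ∈ F := Icc_runEnd_subset hp (mem_Icc.mpr ⟨by omega, by omega⟩)
  rcases (mem_filter.mp hp').2 with h0 | h0
  · omega
  · exact h0 hprev

theorem pairwiseDisjoint_Icc_runEnd :
    (F.runStarts : Set ℕ).PairwiseDisjoint (fun p => Icc p (F.runEnd p)) := by
  have key : ∀ p ∈ F.runStarts, ∀ p' ∈ F.runStarts, p < p' →
      Disjoint (Icc p (F.runEnd p)) (Icc p' (F.runEnd p')) := fun p hp p' hp' hlt => by
    have := runEnd_lt_of_lt (mem_filter.mp hp).1 hp' hlt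
    exact disjoint_left.mpr fun l hl hl' => by simp only [mem_Icc] at hl hl'; omega
  intro p hp p' hp' hne
  rcases Nat.lt_or_gt_of_ne hne with hlt | hlt
  · exact key p hp p' hp' hlt
  · exact (key p' hp' p hp hlt).symm

theorem biUnion_Icc_runEnd : F.runStarts.biUnion (fun p => Icc p (F.runEnd p)) = F := by
  refine Subset.antisymm (biUnion_subset.mpr fun p hp => Icc_runEnd_subset (mem_filter.mp hp).1)
    fun e he => ?_
  have hex : ∃ p, Icc p e ⊆ F := ⟨e, by simpa using he⟩
  set p := Nat.find hex
  have hpe : p ≤ e := Nat.find_min' hex (by simpa using he)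
  have hsub : Icc p e ⊆ F := Nat.find_spec hex
  have hstart : p ∈ F.runStarts := by
    refine mem_filter.mpr ⟨hsub (mem_Icc.mpr ⟨le_rfl, hpe⟩), ?_⟩
    by_contra! h
    have : Icc (p - 1) e ⊆ F := fun l hl => by
      rcases eq_or_ne l (p - 1) with rfl | hne
      · exact h.2
      · exact hsub (by simp only [mem_Icc] at hl ⊢; omega)
    have := Nat.find_min' hex this
    omega
  refine mem_biUnion.mpr ⟨p, hstart, mem_Icc.mpr ⟨hpe, ?_⟩⟩
  by_contra! h
  have := le_runEnd (F := F) p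
  exact runEnd_add_one_notMem p (hsub (mem_Icc.mpr ⟨by omega, by omega⟩))

theorem pairwiseDisjoint_disjSum_Icc_runEnd {G : Finset ℕ} (hFG : Disjoint F G) :
    ((F.runStarts.disjSum G.runStarts : Finset (ℕ ⊕ ℕ)) : Set (ℕ ⊕ ℕ)).PairwiseDisjoint
      (Sum.elim (fun p => Icc p (F.runEnd p)) (fun p => Icc p (G.runEnd p))) := by
  have hF : ∀ p ∈ F.runStarts, Icc p (F.runEnd p) ⊆ F :=
    fun p hp => Icc_runEnd_subset (mem_filter.mp hp).1
  have hG : ∀ p ∈ G.runStarts, Icc p (G.runEnd p) ⊆ G :=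
    fun p hp => Icc_runEnd_subset (mem_filter.mp hp).1
  rintro (p | p) hp (q | q) hq hpq <;>
    simp only [mem_coe, inl_mem_disjSum, inr_mem_disjSum, ne_eq, Sum.inl.injEq,
      Sum.inr.injEq] at hp hq hpq ⊢
  · exact pairwiseDisjoint_Icc_runEnd hp hq hpq
  · exact hFG.mono (hF p hp) (hG q hq)
  · exact (hFG.mono (hF q hq) (hG p hp)).symm
  · exact pairwiseDisjoint_Icc_runEnd hp hq hpq

theorem sum_eq_sum_runStarts {M : Type*} [AddCommMonoid M] (f : ℕ → M) :
    ∑ l ∈ F, f l = ∑ p ∈ F.runStarts, ∑ l ∈ Icc p (F.runEnd p), f l := by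
  conv_lhs => rw [← biUnion_Icc_runEnd (F := F)]
  exact sum_biUnion pairwiseDisjoint_Icc_runEnd

end Finset

section Branch

variable (σ : ℕ → Bool)

theorem trunc_length (l : ℕ) : (trunc σ l).length = l := by simp [trunc]

theorem trunc_injective : Function.Injective (trunc σ) := fun i j h => by
  simpa [trunc_length] using congrArg List.length h

theorem take_trunc (i j : ℕ) : (trunc σ j).take i = trunc σ (min i j) :=
  List.ext_getElem (by simp [trunc]) fun _ _ _ => by simp [trunc]

theorem trunc_prefix_trunc {i j : ℕ} (h : i ≤ j) : trunc σ i <+: trunc σ j := by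
  simpa [take_trunc, h] using List.take_prefix i (trunc σ j)

theorem eq_trunc_of_prefix {s : List Bool} {j : ℕ} (h : s <+: trunc σ j) :
    s = trunc σ s.length := by
  have hl : s.length ≤ j := by simpa [trunc_length] using h.length_le
  rw [List.prefix_iff_eq_take, take_trunc, min_eq_left hl] at h
  exact h

theorem isSeg_image_trunc_Icc {a b : ℕ} (hab : a ≤ b) : IsSeg ((Icc a b).image (trunc σ)) := by
  refine ⟨trunc σ a, trunc σ b, trunc_prefix_trunc σ hab, fun s => ⟨?_, ?_⟩⟩
  · simp only [mem_image, mem_Icc]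
    rintro ⟨l, ⟨hal, hlb⟩, rfl⟩
    exact ⟨trunc_prefix_trunc σ hal, trunc_prefix_trunc σ hlb⟩
  · rintro ⟨hat, htb⟩
    have hs := eq_trunc_of_prefix σ htb
    have hab' : a ≤ s.length ∧ s.length ≤ b := by
      constructor
      · simpa [trunc_length] using hat.length_le
      · simpa [trunc_length] using htb.length_le
    exact mem_image.mpr ⟨s.length, mem_Icc.mpr hab', hs.symm⟩

end Branch

section JamesTree

variable {x : List Bool → ℝ} {ι : Type*} (I : Finset ι) (S : ι → Finset (List Bool))

theorem JTnorm_nonneg (hx : MemJT x) : 0 ≤ JTnorm x :=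
  le_csSup hx ⟨0, Fin.elim0, Fin.rec0, Fin.rec0, by simp⟩

theorem sqrt_sum_sq_sum_le_JTnorm (hx : MemJT x) (hS : ∀ i ∈ I, IsSeg (S i))
    (hdisj : (I : Set ι).PairwiseDisjoint S) :
    √(∑ i ∈ I, (∑ s ∈ S i, x s) ^ 2) ≤ JTnorm x := by
  let e := I.equivFin.symm
  refine le_csSup hx ⟨#I, fun j => S (e j), fun j => hS _ (e j).2,
    fun i j hij => hdisj (e i).2 (e j).2 fun h => hij (e.injective (Subtype.ext h)), ?_⟩
  rw [← sum_coe_sort I, ← e.sum_comp]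

theorem abs_sum_mul_sum_le_sqrt_card_mul_JTnorm (hx : MemJT x) (hS : ∀ i ∈ I, IsSeg (S i))
    (hdisj : (I : Set ι).PairwiseDisjoint S) (w : ι → ℝ) (hw : ∀ i ∈ I, |w i| ≤ 1) :
    |∑ i ∈ I, w i * ∑ s ∈ S i, x s| ≤ √(#I : ℝ) * JTnorm x := by
  have hw2 : ∑ i ∈ I, w i ^ 2 ≤ #I := by
    simpa using sum_le_sum fun i hi => (sq_abs (w i)).symm.trans_le
      (pow_le_one₀ (abs_nonneg (w i)) (hw i hi))
  calc |∑ i ∈ I, w i * ∑ s ∈ S i, x s|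
      ≤ ∑ i ∈ I, |w i| * |∑ s ∈ S i, x s| := by
        simpa only [abs_mul] using abs_sum_le_sum_abs (fun i => w i * ∑ s ∈ S i, x s) I
    _ ≤ √(∑ i ∈ I, |w i| ^ 2) * √(∑ i ∈ I, |∑ s ∈ S i, x s| ^ 2) :=
        Real.sum_mul_le_sqrt_mul_sqrt _ _ _
    _ ≤ √(#I : ℝ) * JTnorm x := by
        simp only [sq_abs]
        exact mul_le_mul (Real.sqrt_le_sqrt hw2) (sqrt_sum_sq_sum_le_JTnorm I S hx hS hdisj)
          (Real.sqrt_nonneg _) (Real.sqrt_nonneg _)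

end JamesTree

def layer (h v : ℤ) : ℤ := (if h ≤ v then 1 else 0) - (if v ≤ -h then 1 else 0)

theorem sum_layer {v d : ℤ} (hv : |v| ≤ d) : ∑ h ∈ Icc 1 d, layer h v = v := by
  obtain ⟨hvl, hvu⟩ := abs_le.mp hv
  have hpos : (Icc 1 d).filter (· ≤ v) = Icc 1 v := by
    ext h; simp only [mem_filter, mem_Icc]; omega
  have hneg : (Icc 1 d).filter (v ≤ -·) = Icc 1 (-v) := by
    ext h; simp only [mem_filter, mem_Icc]; omega
  simp only [layer, sum_sub_distrib, sum_boole, hpos, hneg, Int.card_Icc, add_sub_cancel_right]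
  exact Int.toNat_sub_toNat_neg v

section Crossings

variable {c : ℕ → ℤ} {R : ℕ} {m : Finset ℕ}

theorem card_runStarts_add_card_runStarts_le (hc0 : c 0 = 0) (hcR : c (R + 1) = 0)
    (hstep : ∀ l, c (l + 1) ≤ c l + 1) (hup : ∀ l, c l < c (l + 1) → l ∈ m) {h : ℤ} (hh : 0 < h) :
    #((range (R + 1)).filter (h ≤ c ·)).runStarts +
      #((range (R + 1)).filter (c · ≤ -h)).runStarts ≤ #m := by
  set A := (range (R + 1)).filter (h ≤ c ·)
  set B := (range (R + 1)).filter (c · ≤ -h)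
  have hA : ∀ p ∈ A.runStarts, 1 ≤ p ∧ p - 1 ∈ m.filter (0 ≤ c ·) := by
    intro p hp
    obtain ⟨hpA, hprev⟩ := mem_filter.mp hp
    obtain ⟨hpR, hhp⟩ := mem_filter.mp hpA
    rw [mem_range] at hpR
    have hp0 : p ≠ 0 := by rintro rfl; omega
    have hlt : c (p - 1) < h := by
      by_contra! hle
      exact hprev.resolve_left hp0 (mem_filter.mpr ⟨mem_range.mpr (by omega), hle⟩)
    have hsucc : p - 1 + 1 = p := by omega
    have := hstep (p - 1)
    rw [hsucc] at this
    exact ⟨by omega, mem_filter.mpr ⟨hup _ (by rw [hsucc]; omega), by omega⟩⟩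
  have hB : ∀ p ∈ B.runStarts, B.runEnd p ∈ m.filter (¬ 0 ≤ c ·) := by
    intro p hp
    set q := B.runEnd p
    have hqB : q ∈ B := Icc_runEnd_subset (mem_filter.mp hp).1 (mem_Icc.mpr ⟨le_runEnd p, le_rfl⟩)
    obtain ⟨hqR, hcq⟩ := mem_filter.mp hqB
    rw [mem_range] at hqR
    have hnext : -h < c (q + 1) := by
      rcases Nat.lt_or_ge (q + 1) (R + 1) with hlt | hge
      · by_contra! hle
        exact runEnd_add_one_notMem p (mem_filter.mpr ⟨mem_range.mpr hlt, hle⟩)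
      · rw [show q = R by omega, hcR]; omega
    exact mem_filter.mpr ⟨hup q (by omega), by omega⟩
  calc #A.runStarts + #B.runStarts
      ≤ #(m.filter (0 ≤ c ·)) + #(m.filter (¬ 0 ≤ c ·)) := by
        refine add_le_add ?_ ?_
        · exact card_le_card_of_injOn (· - 1) (fun p hp => (hA p hp).2)
            fun p hp q hq hpq => by
              have := (hA p hp).1; have := (hA q hq).1; simp only at hpq; omega
        · exact card_le_card_of_injOn B.runEnd hB fun p hp q hq hpq =>
            pairwiseDisjoint_Icc_runEnd.elim_finset hp hq _ (mem_Icc.mpr ⟨le_runEnd p, le_rfl⟩)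
              (by rw [hpq]; exact mem_Icc.mpr ⟨le_runEnd q, le_rfl⟩)
    _ = #m := card_filter_add_card_filter_not _

end Crossings

section Layers

variable {x : List Bool → ℝ} (σ : ℕ → Bool) {c : ℕ → ℤ} {R : ℕ} {m : Finset ℕ}

theorem abs_sum_layer_mul_trunc_le (hx : MemJT x) (hc0 : c 0 = 0) (hcR : c (R + 1) = 0)
    (hstep : ∀ l, c (l + 1) ≤ c l + 1) (hup : ∀ l, c l < c (l + 1) → l ∈ m) {h : ℤ} (hh : 0 < h) :
    |∑ l ∈ range (R + 1), (layer h (c l) : ℝ) * x (trunc σ l)| ≤ √(#m : ℝ) * JTnorm x := by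
  set A := (range (R + 1)).filter (h ≤ c ·)
  set B := (range (R + 1)).filter (c · ≤ -h)
  have hAB : Disjoint A B := disjoint_filter.mpr fun _ _ h1 h2 => by omega
  set I := A.runStarts.disjSum B.runStarts
  set J := Sum.elim (fun p => Icc p (A.runEnd p)) (fun p => Icc p (B.runEnd p))
  set w : ℕ ⊕ ℕ → ℝ := Sum.elim 1 (-1)
  have hsum : ∑ l ∈ range (R + 1), (layer h (c l) : ℝ) * x (trunc σ l) =
      ∑ i ∈ I, w i * ∑ s ∈ (J i).image (trunc σ), x s := by
    simp only [layer, Int.cast_sub, Int.cast_ite, Int.cast_one, Int.cast_zero, sub_mul, ite_mul,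
      one_mul, zero_mul, sum_sub_distrib, ← sum_filter]
    rw [sum_disjSum, sum_eq_sum_runStarts (F := A), sum_eq_sum_runStarts (F := B)]
    simp [w, J, sum_image (trunc_injective σ).injOn, sub_eq_add_neg]
  have hseg : ∀ i ∈ I, IsSeg ((J i).image (trunc σ)) := by
    rintro (p | p) - <;> exact isSeg_image_trunc_Icc σ (le_runEnd p)
  have hdisj : (I : Set (ℕ ⊕ ℕ)).PairwiseDisjoint fun i => (J i).image (trunc σ) :=
    fun i hi j hj hij => (disjoint_image (trunc_injective σ)).mpr
      (pairwiseDisjoint_disjSum_Icc_runEnd hAB hi hj hij)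
  have hw : ∀ i ∈ I, |w i| ≤ 1 := by rintro (p | p) - <;> simp [w]
  have hcard : (#I : ℝ) ≤ #m := by
    rw [card_disjSum]
    exact_mod_cast card_runStarts_add_card_runStarts_le hc0 hcR hstep hup hh
  rw [hsum]
  calc |∑ i ∈ I, w i * ∑ s ∈ (J i).image (trunc σ), x s| ≤ √(#I : ℝ) * JTnorm x :=
        abs_sum_mul_sum_le_sqrt_card_mul_JTnorm I _ hx hseg hdisj w hw
    _ ≤ √(#m : ℝ) * JTnorm x := by gcongr; exact JTnorm_nonneg hx

theorem abs_sum_mul_trunc_le (hx : MemJT x) (hc0 : c 0 = 0) (hcR : c (R + 1) = 0)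
    (hstep : ∀ l, c (l + 1) ≤ c l + 1) (hup : ∀ l, c l < c (l + 1) → l ∈ m) {d : ℕ}
    (hd : ∀ l, |c l| ≤ d) :
    |∑ l ∈ range (R + 1), (c l : ℝ) * x (trunc σ l)| ≤ d * (√(#m : ℝ) * JTnorm x) := by
  have hlayers : ∀ l, (c l : ℝ) = ∑ h ∈ Icc 1 (d : ℤ), (layer h (c l) : ℝ) := fun l => by
    rw [← Int.cast_sum, sum_layer (hd l)]
  calc |∑ l ∈ range (R + 1), (c l : ℝ) * x (trunc σ l)|
      = |∑ h ∈ Icc 1 (d : ℤ), ∑ l ∈ range (R + 1), (layer h (c l) : ℝ) * x (trunc σ l)| := by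
        rw [sum_comm]
        simp only [hlayers, sum_mul]
    _ ≤ ∑ h ∈ Icc 1 (d : ℤ), |∑ l ∈ range (R + 1), (layer h (c l) : ℝ) * x (trunc σ l)| :=
        abs_sum_le_sum_abs _ _
    _ ≤ ∑ h ∈ Icc 1 (d : ℤ), √(#m : ℝ) * JTnorm x := sum_le_sum fun h hh =>
        abs_sum_layer_mul_trunc_le σ hx hc0 hcR hstep hup (by have := (mem_Icc.mp hh).1; omega)
    _ = d * (√(#m : ℝ) * JTnorm x) := by simp

end Layers

theorem natAbs_card_inter_Icc_sub_le_dseg (n m : Finset ℕ) (a b : ℕ) :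
    (((n ∩ Icc a b).card : ℤ) - ((m ∩ Icc a b).card : ℤ)).natAbs ≤ dseg n m := by
  have hbound : ∀ a b, (((n ∩ Icc a b).card : ℤ) - ((m ∩ Icc a b).card : ℤ)).natAbs ≤ #n + #m :=
    fun a b => by
      have := card_le_card (inter_subset_left (s₁ := n) (s₂ := Icc a b))
      have := card_le_card (inter_subset_left (s₁ := m) (s₂ := Icc a b))
      omega
  refine le_trans ?_ (le_ciSup ⟨#n + #m, ?_⟩ a)
  · exact le_ciSup ⟨#n + #m, by rintro _ ⟨b, rfl⟩; exact hbound a b⟩ b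
  · rintro _ ⟨a, rfl⟩
    exact ciSup_le (hbound a)

def tailDiff (n m : Finset ℕ) (l : ℕ) : ℤ := #(n.filter (l ≤ ·)) - #(m.filter (l ≤ ·))

section TailDiff

variable {n m : Finset ℕ}

theorem card_filter_le_eq (s : Finset ℕ) (l : ℕ) :
    #(s.filter (l ≤ ·)) = #(s.filter (l + 1 ≤ ·)) + if l ∈ s then 1 else 0 := by
  rw [card_filter, card_filter, ← sum_ite_eq' s l (fun _ => 1), ← sum_add_distrib]
  exact sum_congr rfl fun a _ => by split_ifs <;> omega

theorem tailDiff_succ (l : ℕ) : tailDiff n m (l + 1) =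
    tailDiff n m l + (if l ∈ m then 1 else 0) - (if l ∈ n then 1 else 0) := by
  simp only [tailDiff, card_filter_le_eq n l, card_filter_le_eq m l]
  push_cast
  ring

theorem tailDiff_succ_le (l : ℕ) : tailDiff n m (l + 1) ≤ tailDiff n m l + 1 := by
  rw [tailDiff_succ]; split_ifs <;> omega

theorem mem_of_tailDiff_lt_succ {l : ℕ} (h : tailDiff n m l < tailDiff n m (l + 1)) : l ∈ m := by
  rw [tailDiff_succ] at h; split_ifs at h <;> first | assumption | omega

theorem tailDiff_zero (h : #n = #m) : tailDiff n m 0 = 0 := by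
  simp [tailDiff, h]

variable {R : ℕ}

theorem filter_le_eq_inter_Icc {s : Finset ℕ} (hs : ∀ a ∈ s, a ≤ R) (l : ℕ) :
    s.filter (l ≤ ·) = s ∩ Icc l R := by
  ext a
  simp only [mem_filter, mem_inter, mem_Icc]
  exact ⟨fun h => ⟨h.1, h.2, hs a h.1⟩, fun h => ⟨h.1, h.2.1⟩⟩

theorem abs_tailDiff_le_dseg (hR : ∀ a ∈ n ∪ m, a ≤ R) (l : ℕ) : |tailDiff n m l| ≤ dseg n m := by
  rw [tailDiff, filter_le_eq_inter_Icc (fun a ha => hR a (mem_union_left m ha)),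
    filter_le_eq_inter_Icc (fun a ha => hR a (mem_union_right n ha)), Int.abs_eq_natAbs]
  exact_mod_cast natAbs_card_inter_Icc_sub_le_dseg n m l R

theorem tailDiff_eq_zero_of_lt (hR : ∀ a ∈ n ∪ m, a ≤ R) {l : ℕ} (hl : R < l) :
    tailDiff n m l = 0 := by
  rw [tailDiff, filter_le_eq_inter_Icc (fun a ha => hR a (mem_union_left m ha)),
    filter_le_eq_inter_Icc (fun a ha => hR a (mem_union_right n ha)), Icc_eq_empty_of_lt hl]
  simp

end TailDiff

theorem pairDiff_eq (σ : ℕ → Bool) (k : ℕ) (n m : Finset ℕ) (R : ℕ) (x : List Bool → ℝ) :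
    pairDiff σ k n m R x =
      (1 / √(k : ℝ)) * ∑ l ∈ range (R + 1), (tailDiff n m l : ℝ) * x (trunc σ l) := by
  simp [pairDiff, tailDiff]

theorem f_sigma_one_lipschitz_general (σ : ℕ → Bool) (k : ℕ)
    (n m : Finset ℕ) (hn : n.card = k) (hm : m.card = k)
    (R : ℕ) (hR : ∀ a ∈ n ∪ m, a ≤ R)
    (x : List Bool → ℝ) (hx : MemJT x) (hx1 : JTnorm x ≤ 1) :
    |pairDiff σ k n m R x| ≤ (dseg n m : ℝ) := by
  have hsum := abs_sum_mul_trunc_le σ hx (tailDiff_zero (hn.trans hm.symm))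
    (tailDiff_eq_zero_of_lt hR (Nat.lt_succ_self R)) tailDiff_succ_le
    (fun _ => mem_of_tailDiff_lt_succ) (abs_tailDiff_le_dseg hR)
  rw [hm] at hsum
  rw [pairDiff_eq, abs_mul, abs_of_nonneg (by positivity)]
  calc 1 / √(k : ℝ) * |∑ l ∈ range (R + 1), (tailDiff n m l : ℝ) * x (trunc σ l)|
      ≤ 1 / √(k : ℝ) * (dseg n m * (√(k : ℝ) * JTnorm x)) := by gcongr
    _ = dseg n m * JTnorm x * (√(k : ℝ) / √(k : ℝ)) := by ring
    _ ≤ dseg n m * 1 * 1 := by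
        gcongr
        exact div_self_le_one _
    _ = dseg n m := by ring

/-- For any `σ ∈ 2^ω` and `k ∈ ℕ`, the map `f_σ^k : [ℕ]^k → B ⊆ JT*`,
`f_σ^k(n) = (1/√k)·Σ_{i=1}^k Σ_{s ≤ σ|_{n_i}} e*_s`, is `1`-Lipschitz for the interlacing
metric `d_K`: the functional `f_σ^k(n) - f_σ^k(m)` has dual norm at most `d_K(n,m)`. -/
theorem f_sigma_one_lipschitz (σ : ℕ → Bool) (k : ℕ) (hk : 1 ≤ k)
    (n m : Finset ℕ) (hn : n.card = k) (hm : m.card = k)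
    (R : ℕ) (hR : ∀ a ∈ n ∪ m, a ≤ R)
    (x : List Bool → ℝ) (hx : MemJT x) (hx1 : JTnorm x ≤ 1) :
    |pairDiff σ k n m R x| ≤ (dseg n m : ℝ) :=
  f_sigma_one_lipschitz_general σ k n m hn hm R hR x hx hx1
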